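/- arXiv:cs/0111051 — 2 statements merged into one kernel-verified Lean document; each statement's English description precedes it below -/
import Mathlib

section
/- The graph consisting of a path on 12 vertices v1,...,v12 (edges between consecutive vertices) together with the six additional edges {v1,v8}, {v2,v7}, {v3,v10}, {v4,v9}, {v5,v12}, {v6,v11} is not planar (it contains a subdivision of K_{3,3}). -/
/-- `H` is a minor of `G`: vertices of `G` are mapped to branch sets (possibly deleted),
branch sets are connected, and adjacency in `H` is realized by edges of `G`. -/
def IsMinor {W V : Type} (H : SimpleGraph W) (G : SimpleGraph V) : Prop :=
  ∃ φ : V → Option W,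
    (∀ w : W, ∃ v, φ v = some w) ∧
    (∀ w : W, (G.induce {v | φ v = some w}).Connected) ∧
    (∀ w₁ w₂ : W, H.Adj w₁ w₂ → ∃ v₁ v₂, φ v₁ = some w₁ ∧ φ v₂ = some w₂ ∧ G.Adj v₁ v₂)

/-- By Wagner's theorem, a graph is non-planar iff it has a `K₃,₃` or `K₅` minor. -/
def NonPlanar {V : Type} (G : SimpleGraph V) : Prop :=
  IsMinor (completeBipartiteGraph (Fin 3) (Fin 3)) G ∨ IsMinor (⊤ : SimpleGraph (Fin 5)) G

def Planar {V : Type} (G : SimpleGraph V) : Prop := ¬ NonPlanar G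

/-- The path `v₁ … v₁₂` (0-indexed `0 … 11`) together with the chords
`{v₁,v₈},{v₂,v₇},{v₃,v₁₀},{v₄,v₉},{v₅,v₁₂},{v₆,v₁₁}`. -/
def interleavingBlockGraph : SimpleGraph (Fin 12) :=
  SimpleGraph.fromRel (fun a b =>
    (b.val = a.val + 1) ∨
    ((a, b) ∈ ([(0, 7), (1, 6), (2, 9), (3, 8), (4, 11), (5, 10)] : List (Fin 12 × Fin 12))))


instance : DecidableRel interleavingBlockGraph.Adj := fun a b =>
  decidable_of_iff _ (SimpleGraph.fromRel_adj _ a b).symm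

instance : DecidableRel (completeBipartiteGraph (Fin 3) (Fin 3)).Adj := fun a b =>
  inferInstanceAs (Decidable (a.isLeft ∧ b.isRight ∨ a.isRight ∧ b.isLeft))

/-- Branch-set assignment witnessing the `K₃,₃` minor: parts `{1},{3},{9}` and
`{2},{0,7,8},{4,5,6,10}` (vertex `11` deleted). -/
def ibPhi : Fin 12 → Option (Fin 3 ⊕ Fin 3)
  | 0 => some (Sum.inr 1)
  | 1 => some (Sum.inl 0)
  | 2 => some (Sum.inr 0)
  | 3 => some (Sum.inl 1)
  | 4 => some (Sum.inr 2)
  | 5 => some (Sum.inr 2)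
  | 6 => some (Sum.inr 2)
  | 7 => some (Sum.inr 1)
  | 8 => some (Sum.inr 1)
  | 9 => some (Sum.inl 2)
  | 10 => some (Sum.inr 2)
  | 11 => none

lemma ib_minor : IsMinor (completeBipartiteGraph (Fin 3) (Fin 3)) interleavingBlockGraph := by
  refine ⟨ibPhi, by decide, ?_, by decide⟩
  rintro (i | i) <;> fin_cases i <;>
    rw [SimpleGraph.connected_iff] <;>
    refine ⟨by decide, ?_⟩
  · exact ⟨⟨1, by decide⟩⟩
  · exact ⟨⟨3, by decide⟩⟩
  · exact ⟨⟨9, by decide⟩⟩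
  · exact ⟨⟨2, by decide⟩⟩
  · exact ⟨⟨0, by decide⟩⟩
  · exact ⟨⟨4, by decide⟩⟩

/-- The interleaving-block graph contains a subdivision of `K₃,₃` (in particular a
`K₃,₃` minor), hence it is not planar. -/
theorem interleavingBlockGraph_not_planar :
    IsMinor (completeBipartiteGraph (Fin 3) (Fin 3)) interleavingBlockGraph ∧
    ¬ Planar interleavingBlockGraph := by
  exact ⟨ib_minor, fun h => h (Or.inl ib_minor)⟩
end

section
/- For any interval I of k+1 consecutive indices and any secondary structure P, the number of stacking pairs of P having at least one of their four base indices in I is at most k+2. -/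
/-!
Send each stacking pair `(i, j)` touching `I = [a, a+k]` to `i + 1` if that lies in
`[a, a+k+1]`, and to `j` otherwise; either way the image lies in `[a, a+k+1]`, a set of
`k + 2` indices. The map is injective because `i + 1` is the left end of the base pair
`(i+1, j-1)` and `j` the right end of `(i, j)`, and in a secondary structure every index
is an end of at most one base pair, never both a left and a right end.
-/

/-- A secondary structure in the purely combinatorial sense: base pairs `(i,j)` with
`i+2 ≤ j`, no two pairs sharing an index. -/
def DisjointPairs (P : Finset (ℕ × ℕ)) : Prop :=
  (∀ p ∈ P, p.1 + 2 ≤ p.2) ∧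
  (∀ p ∈ P, ∀ q ∈ P, p ≠ q → p.1 ≠ q.1 ∧ p.1 ≠ q.2 ∧ p.2 ≠ q.1 ∧ p.2 ≠ q.2)

/-- The stacking pairs of `P`, each recorded by its outer base pair `(i,j)`
(so that `(i,j), (i+1,j-1) ∈ P` and `i+4 ≤ j`). -/
def spSet (P : Finset (ℕ × ℕ)) : Finset (ℕ × ℕ) :=
  P.filter (fun p => (p.1 + 1, p.2 - 1) ∈ P ∧ p.1 + 4 ≤ p.2)

theorem mem_spSet {P : Finset (ℕ × ℕ)} {s : ℕ × ℕ} :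
    s ∈ spSet P ↔ s ∈ P ∧ (s.1 + 1, s.2 - 1) ∈ P ∧ s.1 + 4 ≤ s.2 :=
  Finset.mem_filter

namespace DisjointPairs

variable {P : Finset (ℕ × ℕ)} {p q : ℕ × ℕ}

theorem fst_ne_snd (hP : DisjointPairs P) (hp : p ∈ P) (hq : q ∈ P) : p.1 ≠ q.2 := by
  by_cases hpq : p = q
  · subst hpq
    have := hP.1 p hp
    omega
  · exact (hP.2 p hp q hq hpq).2.1

theorem eq_of_fst_eq (hP : DisjointPairs P) (hp : p ∈ P) (hq : q ∈ P) (h : p.1 = q.1) :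
    p = q := by
  by_contra hpq
  exact (hP.2 p hp q hq hpq).1 h

theorem eq_of_snd_eq (hP : DisjointPairs P) (hp : p ∈ P) (hq : q ∈ P) (h : p.2 = q.2) :
    p = q := by
  by_contra hpq
  exact (hP.2 p hp q hq hpq).2.2.2 h

theorem eq_of_mem_spSet_of_common_index (hP : DisjointPairs P) {s t : ℕ × ℕ}
    (hs : s ∈ spSet P) (ht : t ∈ spSet P) {x : ℕ}
    (hxs : x = s.1 + 1 ∨ x = s.2) (hxt : x = t.1 + 1 ∨ x = t.2) : s = t := by
  obtain ⟨hsP, hs_inner, -⟩ := mem_spSet.1 hs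
  obtain ⟨htP, ht_inner, -⟩ := mem_spSet.1 ht
  rcases hxs with rfl | rfl <;> rcases hxt with hx | hx
  · exact hP.eq_of_fst_eq hsP htP (by omega)
  · exact absurd hx (hP.fst_ne_snd hs_inner htP)
  · exact absurd hx.symm (hP.fst_ne_snd ht_inner hsP)
  · exact hP.eq_of_snd_eq hsP htP hx

end DisjointPairs

/-- For any interval `I = [a, a+k]` of `k+1` consecutive indices, at most `k+2`
stacking pairs of a secondary structure `P` have one of their four base indices in `I`. -/
theorem interval_touches_at_most
    (P : Finset (ℕ × ℕ)) (hP : DisjointPairs P) (a k : ℕ) :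
    ((spSet P).filter (fun s =>
        s.1 ∈ Finset.Icc a (a + k) ∨ s.1 + 1 ∈ Finset.Icc a (a + k) ∨
        s.2 - 1 ∈ Finset.Icc a (a + k) ∨ s.2 ∈ Finset.Icc a (a + k))).card ≤ k + 2 := by
  set J := Finset.Icc a (a + k + 1)
  let anchor : ℕ × ℕ → ℕ := fun s => if s.1 + 1 ∈ J then s.1 + 1 else s.2
  have anchor_cases (s : ℕ × ℕ) : anchor s = s.1 + 1 ∨ anchor s = s.2 := by
    by_cases h : s.1 + 1 ∈ J <;> simp [anchor, h]
  calc _ ≤ J.card := by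
          refine Finset.card_le_card_of_injOn anchor (fun s hs => ?_) (fun s hs t ht hst => ?_)
          · simp only [Finset.coe_filter, Set.mem_ofPred_eq, Finset.mem_Icc] at hs
            simp only [anchor, J, Finset.mem_coe, Finset.mem_Icc]
            split_ifs <;> omega
          · exact hP.eq_of_mem_spSet_of_common_index (Finset.mem_filter.1 hs).1
              (Finset.mem_filter.1 ht).1 (anchor_cases s) (hst ▸ anchor_cases t)
    _ = k + 2 := by simp only [J, Nat.card_Icc]; omega
end
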